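/- arXiv:2412.03425 — 4 statements merged into one kernel-verified Lean document; each statement's English description precedes it below -/
import Mathlib

section
/- Let f be continuous, 1-periodic, with nonnegative Fourier coefficients a_n, and let μ be the uniform measure on the N equidistant points {k/N : 0 ≤ k ≤ N−1}. Then J(μ) − J(μ_L) = Σ_{n∈ℤ∖{0}} a_{nN}, i.e. the energy excess of the equidistant configuration equals the sum of the Fourier coefficients at multiples of N. -/
open MeasureTheory Complex Real
open scoped Real ENNReal

/-! The discrete energy is `N⁻² ∑_{j,k} f((j - k)/N)`; expanding `f` in its absolutely convergent
Fourier series, the double character sum `∑_{j,k} e(n(j - k)/N) = |∑_j e(nj/N)|²` equals `N²` when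
`N ∣ n` and vanishes otherwise, so only the coefficients `a_{mN}` survive. Against Lebesgue measure
on `[0,1]` every nonconstant character integrates to zero and only `a_0` survives. -/

noncomputable def fourierSum (c : ℤ → ℂ) (x : ℝ) : ℂ :=
  ∑' n : ℤ, c n * exp (2 * π * I * n * x)

noncomputable def equispacedMeasure (N : ℕ) : Measure ℝ :=
  (N : ℝ≥0∞)⁻¹ • ∑ k ∈ Finset.range N, Measure.dirac ((k : ℝ) / N)

lemma norm_exp_two_pi_I_int_mul (n : ℤ) (x : ℝ) : ‖exp (2 * π * I * n * x)‖ = 1 := by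
  rw [show 2 * π * I * n * x = ((2 * π * n * x : ℝ) : ℂ) * I by push_cast; ring,
    norm_exp_ofReal_mul_I]

lemma exp_two_pi_I_int_mul_sub (n : ℤ) (x y : ℝ) :
    exp (2 * π * I * n * (x - y : ℝ)) =
      exp (2 * π * I * n * x) * exp (2 * π * I * (-n : ℤ) * y) := by
  rw [← Complex.exp_add]
  congr 1
  push_cast
  ring

lemma summable_mul_exp_two_pi_I {c : ℤ → ℂ} (hc : Summable c) (x : ℝ) :
    Summable fun n : ℤ => c n * exp (2 * π * I * n * x) :=
  .of_norm_bounded (summable_norm_iff.2 hc) fun n => by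
    rw [norm_mul, norm_exp_two_pi_I_int_mul, mul_one]

lemma sum_range_exp_two_pi_I_mul_div {N : ℕ} (hN : N ≠ 0) (n : ℤ) :
    ∑ j ∈ Finset.range N, exp (2 * π * I * n * ((j : ℝ) / N : ℝ)) =
      if (N : ℤ) ∣ n then (N : ℂ) else 0 := by
  have hζ := isPrimitiveRoot_exp N hN
  have hpow : ∀ j : ℕ,
      exp (2 * π * I * n * ((j : ℝ) / N : ℝ)) = (exp (2 * π * I / N) ^ n) ^ j := by
    intro j
    rw [← exp_int_mul, ← Complex.exp_nat_mul]
    congr 1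
    push_cast
    ring
  simp only [hpow]
  split_ifs with h
  · simp [(hζ.zpow_eq_one_iff_dvd n).2 h]
  · have hne : exp (2 * π * I / N) ^ n ≠ 1 := mt (hζ.zpow_eq_one_iff_dvd n).1 h
    rw [geom_sum_eq hne, ← zpow_natCast, ← zpow_mul, mul_comm n, zpow_mul, zpow_natCast,
      hζ.pow_eq_one, one_zpow, sub_self, zero_div]

lemma sum_sum_exp_two_pi_I_mul_sub {N : ℕ} (hN : N ≠ 0) (n : ℤ) :
    ∑ j ∈ Finset.range N, ∑ k ∈ Finset.range N,
        exp (2 * π * I * n * ((j : ℝ) / N - (k : ℝ) / N : ℝ)) =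
      if (N : ℤ) ∣ n then (N : ℂ) ^ 2 else 0 := by
  simp only [exp_two_pi_I_int_mul_sub, ← Finset.sum_mul_sum, sum_range_exp_two_pi_I_mul_div hN,
    dvd_neg]
  split_ifs <;> ring

lemma tsum_ite_dvd_eq_tsum_mul {E : Type*} [AddCommMonoid E] [TopologicalSpace E]
    (c : ℤ → E) {N : ℕ} (hN : N ≠ 0) :
    ∑' n : ℤ, (if (N : ℤ) ∣ n then c n else 0) = ∑' m : ℤ, c (m * N) := by
  have hinj : Function.Injective fun m : ℤ => m * N := mul_left_injective₀ (by exact_mod_cast hN)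
  rw [← hinj.tsum_eq]
  · simp
  · intro n hn
    obtain ⟨m, rfl⟩ : (N : ℤ) ∣ n := by by_contra h; simp [h] at hn
    exact ⟨m, mul_comm _ _⟩

lemma integral_equispacedMeasure {E : Type*} [NormedAddCommGroup E] [NormedSpace ℝ E]
    [CompleteSpace E] (N : ℕ) (g : ℝ → E) :
    ∫ x, g x ∂equispacedMeasure N = (N : ℝ)⁻¹ • ∑ k ∈ Finset.range N, g ((k : ℝ) / N) := by
  rw [equispacedMeasure, integral_smul_measure,
    integral_finsetSum_measure fun k _ => integrable_dirac enorm_lt_top]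
  simp [integral_dirac, ENNReal.toReal_inv]

lemma energy_equispacedMeasure {N : ℕ} (hN : N ≠ 0) {c : ℤ → ℂ} (hc : Summable c) :
    ∫ x, ∫ y, fourierSum c (x - y) ∂equispacedMeasure N ∂equispacedMeasure N =
      ∑' m : ℤ, c (m * N) := by
  have hswap :
      ∑ j ∈ Finset.range N, ∑ k ∈ Finset.range N, fourierSum c ((j : ℝ) / N - (k : ℝ) / N) =
        ∑' n : ℤ, c n * ∑ j ∈ Finset.range N, ∑ k ∈ Finset.range N,
          exp (2 * π * I * n * ((j : ℝ) / N - (k : ℝ) / N : ℝ)) := by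
    simp only [fourierSum, Finset.mul_sum]
    rw [Summable.tsum_finsetSum fun j _ => summable_sum fun k _ => summable_mul_exp_two_pi_I hc _]
    exact Finset.sum_congr rfl fun j _ =>
      (Summable.tsum_finsetSum fun k _ => summable_mul_exp_two_pi_I hc _).symm
  simp_rw [integral_equispacedMeasure]
  rw [← Finset.smul_sum, smul_smul, hswap]
  simp_rw [sum_sum_exp_two_pi_I_mul_sub hN, mul_ite, mul_zero]
  rw [tsum_ite_dvd_eq_tsum_mul _ hN, tsum_mul_right, Complex.real_smul]
  push_cast
  field_simp

lemma integral_Icc_exp_two_pi_I_int_mul (n : ℤ) :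
    ∫ y in Set.Icc (0 : ℝ) 1, exp (2 * π * I * n * y) = if n = 0 then 1 else 0 := by
  split_ifs with hn
  · simp [hn]
  have hc : 2 * π * I * n ≠ 0 := by simp [pi_ne_zero, I_ne_zero, hn]
  rw [integral_Icc_eq_integral_Ioc, ← intervalIntegral.integral_of_le zero_le_one,
    integral_exp_mul_complex hc]
  simp [show 2 * π * I * n = n * (2 * π * I) by ring, exp_int_mul_two_pi_mul_I]

lemma integral_Icc_fourierSum_sub {c : ℤ → ℂ} (hc : Summable c) (x : ℝ) :
    ∫ y in Set.Icc (0 : ℝ) 1, fourierSum c (x - y) = c 0 := by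
  have hint : ∀ n : ℤ, Integrable (fun y : ℝ => c n * exp (2 * π * I * n * (x - y : ℝ)))
      (volume.restrict (Set.Icc (0 : ℝ) 1)) := fun n =>
    Continuous.integrableOn_Icc (by fun_prop)
  have hnorm : Summable fun n : ℤ => ∫ y in Set.Icc (0 : ℝ) 1,
      ‖c n * exp (2 * π * I * n * (x - y : ℝ))‖ := by
    refine (summable_norm_iff.2 hc).congr fun n => ?_
    simp only [norm_mul, norm_exp_two_pi_I_int_mul, mul_one]
    simp
  simp only [fourierSum]
  rw [← integral_tsum_of_summable_integral_norm hint hnorm]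
  simp only [exp_two_pi_I_int_mul_sub, ← mul_assoc, integral_const_mul,
    integral_Icc_exp_two_pi_I_int_mul, neg_eq_zero, mul_ite, mul_one, mul_zero]
  rw [tsum_ite_eq]
  simp

lemma energy_volume_Icc {c : ℤ → ℂ} (hc : Summable c) :
    ∫ x in Set.Icc (0 : ℝ) 1, ∫ y in Set.Icc (0 : ℝ) 1, fourierSum c (x - y) = c 0 := by
  simp [integral_Icc_fourierSum_sub hc]

lemma ofReal_integral_integral {α β : Type*} [MeasurableSpace α] [MeasurableSpace β]
    {μ : Measure α} {ν : Measure β} (g : α → β → ℝ) :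
    ((∫ x, ∫ y, g x y ∂ν ∂μ : ℝ) : ℂ) = ∫ x, ∫ y, (g x y : ℂ) ∂ν ∂μ :=
  integral_ofReal.symm.trans (integral_congr_ae (.of_forall fun _ => integral_ofReal.symm))

theorem stmt_3_general (f : ℝ → ℝ) (a : ℤ → ℝ)
    (hsum : Summable a)
    (hF : ∀ x : ℝ, (f x : ℂ) = ∑' n : ℤ, (a n : ℂ) * Complex.exp (2 * π * Complex.I * n * x))
    (N : ℕ) (hN : 1 ≤ N)
    (μ : Measure ℝ)
    (hμ : μ = ((N : ℝ≥0∞))⁻¹ • ∑ k ∈ Finset.range N, Measure.dirac ((k : ℝ) / N)) :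
    (∫ x, ∫ y, f (x - y) ∂μ ∂μ)
      - (∫ x, ∫ y, f (x - y) ∂(volume.restrict (Set.Icc (0:ℝ) 1))
          ∂(volume.restrict (Set.Icc (0:ℝ) 1)))
      = ∑' n : ℤ, (if n = 0 then 0 else a (n * N)) := by
  have hN0 : N ≠ 0 := Nat.one_le_iff_ne_zero.mp hN
  have hc : Summable fun n => (a n : ℂ) := summable_ofReal.2 hsum
  have hf : ∀ x, (f x : ℂ) = fourierSum (fun n => a n) x := hF
  have hμ' : μ = equispacedMeasure N := hμ
  have hdisc : ∫ x, ∫ y, f (x - y) ∂μ ∂μ = ∑' m : ℤ, a (m * N) := by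
    apply ofReal_injective
    rw [ofReal_tsum, ofReal_integral_integral, hμ']
    simp_rw [hf]
    exact energy_equispacedMeasure hN0 hc
  have hleb : ∫ x in Set.Icc (0 : ℝ) 1, ∫ y in Set.Icc (0 : ℝ) 1, f (x - y) = a 0 := by
    apply ofReal_injective
    rw [ofReal_integral_integral]
    simp_rw [hf]
    exact energy_volume_Icc hc
  have hsumN : Summable fun m : ℤ => a (m * N) :=
    hsum.comp_injective (mul_left_injective₀ (by exact_mod_cast hN0))
  rw [hdisc, hleb, hsumN.tsum_eq_add_tsum_ite 0]
  simp

theorem stmt_3 (f : ℝ → ℝ) (a : ℤ → ℝ)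
    (hcont : Continuous f)
    (hper : ∀ x : ℝ, f (x + 1) = f x)
    (ha : ∀ n : ℤ, 0 ≤ a n)
    (hsum : Summable a)
    (hF : ∀ x : ℝ, (f x : ℂ) = ∑' n : ℤ, (a n : ℂ) * Complex.exp (2 * π * Complex.I * n * x))
    (N : ℕ) (hN : 1 ≤ N)
    (μ : Measure ℝ)
    (hμ : μ = ((N : ℝ≥0∞))⁻¹ • ∑ k ∈ Finset.range N, Measure.dirac ((k : ℝ) / N)) :
    (∫ x, ∫ y, f (x - y) ∂μ ∂μ)
      - (∫ x, ∫ y, f (x - y) ∂(volume.restrict (Set.Icc (0:ℝ) 1))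
          ∂(volume.restrict (Set.Icc (0:ℝ) 1)))
      = ∑' n : ℤ, (if n = 0 then 0 else a (n * N)) :=
  stmt_3_general f a hsum hF N hN μ hμ
end

section
/- Let N ≥ 2 and let δ ∈ ℝ^N satisfy Σ_{k=1}^N δ_k = 0. Define V_n ∈ ℂ^N by (V_n)_k = i(2πn/N) e^{iπn(2k−1)/N} for 1 ≤ n ≤ N−1. Then Σ_{n=1}^{⌊N/2⌋} (1/n²) |V_n · δ|² ≥ (2π²/N) ‖δ‖₂², where V_n · δ = Σ_k (V_n)_k δ_k. -/
/-!
Up to the unimodular factor `i e^{iπn/N}`, `V_n · δ` is `2πn/N` times the `n`-th discrete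
Fourier coefficient `δ̂(n) = ∑ₖ ζ^{nk} δₖ` with `ζ = e^{2πi/N}`, so the sum in question is
`(4π²/N²) ∑_{1 ≤ n ≤ N/2} |δ̂(n)|²`. By Parseval, `∑_{n<N} |δ̂(n)|² = N ‖δ‖²`. Since `δ` has zero
sum, `δ̂(0) = 0`, and since `δ` is real, `δ̂(N - n)` is the conjugate of `δ̂(n)`; hence the
frequencies `1 ≤ n ≤ N/2` carry at least half of the total energy.
-/

open Complex Real
open scoped Real

open Finset ComplexConjugate

namespace IsPrimitiveRoot

variable {N : ℕ} {ζ : ℂ}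

theorem conj_pow_eq_inv (hζ : IsPrimitiveRoot ζ N) (hN : N ≠ 0) (m : ℕ) :
    conj (ζ ^ m) = (ζ ^ m)⁻¹ :=
  (Complex.inv_eq_conj (by simp [hζ.norm'_eq_one hN])).symm

theorem sum_pow_mul_conj_pow (hζ : IsPrimitiveRoot ζ N) {k l : ℕ} (hk : k < N) (hl : l < N) :
    ∑ n ∈ range N, ζ ^ (n * k) * conj (ζ ^ (n * l)) = if k = l then (N : ℂ) else 0 := by
  have hζ0 : ζ ≠ 0 := hζ.ne_zero (by omega)
  have hterm : ∀ n, ζ ^ (n * k) * conj (ζ ^ (n * l)) = (ζ ^ k / ζ ^ l) ^ n := fun n => by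
    rw [hζ.conj_pow_eq_inv (by omega), div_pow, ← pow_mul, ← pow_mul, mul_comm k, mul_comm l,
      div_eq_mul_inv]
  simp_rw [hterm]
  split_ifs with hkl
  · simp [hkl, hζ0]
  · have hw : ζ ^ k / ζ ^ l ≠ 1 := fun h =>
      hkl (hζ.pow_inj hk hl (div_eq_one_iff_eq (pow_ne_zero _ hζ0) |>.mp h))
    rw [geom_sum_eq hw, div_pow, pow_right_comm, pow_right_comm ζ l, hζ.pow_eq_one, one_pow,
      one_pow, div_one, sub_self, zero_div]

end IsPrimitiveRoot

section RootDFT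

variable {N : ℕ} {ζ : ℂ}

noncomputable def rootDFT (ζ : ℂ) (x : Fin N → ℂ) (n : ℕ) : ℂ :=
  ∑ k : Fin N, ζ ^ (n * (k : ℕ)) * x k

theorem rootDFT_zero (x : Fin N → ℂ) : rootDFT ζ x 0 = ∑ k, x k := by
  simp [rootDFT]

theorem sum_norm_sq_rootDFT (hζ : IsPrimitiveRoot ζ N) (x : Fin N → ℂ) :
    ∑ n ∈ range N, ‖rootDFT ζ x n‖ ^ 2 = N * ∑ k, ‖x k‖ ^ 2 := by
  apply Complex.ofReal_injective
  push_cast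
  simp_rw [← Complex.mul_conj', rootDFT, map_sum, map_mul, sum_mul_sum, mul_sum]
  calc ∑ n ∈ range N, ∑ k : Fin N, ∑ l : Fin N,
        ζ ^ (n * (k : ℕ)) * x k * (conj (ζ ^ (n * (l : ℕ))) * conj (x l))
      = ∑ k : Fin N, ∑ l : Fin N, x k * conj (x l) *
          ∑ n ∈ range N, ζ ^ (n * (k : ℕ)) * conj (ζ ^ (n * (l : ℕ))) := by
        rw [sum_comm]
        refine sum_congr rfl fun k _ => ?_
        rw [sum_comm]
        simp_rw [mul_sum]
        exact sum_congr rfl fun l _ => sum_congr rfl fun n _ => by ring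
    _ = ∑ k : Fin N, (N : ℂ) * (x k * conj (x k)) := by
        refine sum_congr rfl fun k _ => ?_
        simp_rw [hζ.sum_pow_mul_conj_pow k.isLt (Fin.isLt _), Fin.val_inj, mul_ite, mul_zero,
          sum_ite_eq, mem_univ, if_true, mul_comm]

theorem rootDFT_sub_eq_conj (hζ : IsPrimitiveRoot ζ N) (δ : Fin N → ℝ) {n : ℕ}
    (hn : n ≤ N) :
    rootDFT ζ (fun k => (δ k : ℂ)) (N - n) = conj (rootDFT ζ (fun k => (δ k : ℂ)) n) := by
  simp only [rootDFT, map_sum, map_mul, Complex.conj_ofReal]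
  refine sum_congr rfl fun k _ => congrArg (· * _) ?_
  rw [hζ.conj_pow_eq_inv k.pos.ne']
  refine eq_inv_of_mul_eq_one_left ?_
  rw [← pow_add, ← add_mul, Nat.sub_add_cancel hn, pow_mul, hζ.pow_eq_one, one_pow]

end RootDFT

theorem sum_range_le_two_mul_sum_Icc_half (N : ℕ) {g : ℕ → ℝ} (hg : ∀ n, 0 ≤ g n)
    (h0 : g 0 = 0) (hsymm : ∀ n ≤ N, g (N - n) = g n) :
    ∑ n ∈ range N, g n ≤ 2 * ∑ n ∈ Icc 1 (N / 2), g n := by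
  set A := Icc 1 (N / 2)
  have hcover : range N ⊆ insert 0 (A ∪ A.image (N - ·)) := by
    intro n hn
    simp only [A, mem_range, mem_insert, mem_union, mem_Icc, mem_image] at hn ⊢
    by_cases hlow : n ≤ N / 2
    · omega
    · exact Or.inr (Or.inr ⟨N - n, by omega, by omega⟩)
  calc ∑ n ∈ range N, g n
      ≤ ∑ n ∈ insert 0 (A ∪ A.image (N - ·)), g n :=
        sum_le_sum_of_subset_of_nonneg hcover fun n _ _ => hg n
    _ = ∑ n ∈ A ∪ A.image (N - ·), g n := sum_insert_zero h0
    _ ≤ ∑ n ∈ A, g n + ∑ n ∈ A.image (N - ·), g n := by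
        rw [← sum_union_inter]
        exact le_add_of_nonneg_right (sum_nonneg fun n _ => hg n)
    _ ≤ ∑ n ∈ A, g n + ∑ n ∈ A, g (N - n) := by
        grw [sum_image_le_of_nonneg fun n _ => hg n]
    _ = 2 * ∑ n ∈ A, g n := by
        rw [sum_congr rfl fun n hn => hsymm n (by simp only [A, mem_Icc] at hn; omega)]
        ring

theorem card_mul_sum_sq_le_two_mul_sum_norm_sq_rootDFT {N : ℕ} {ζ : ℂ}
    (hζ : IsPrimitiveRoot ζ N) (δ : Fin N → ℝ) (hδ : ∑ k, δ k = 0) :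
    N * ∑ k, δ k ^ 2 ≤ 2 * ∑ n ∈ Icc 1 (N / 2), ‖rootDFT ζ (fun k => (δ k : ℂ)) n‖ ^ 2 := by
  have hparseval := sum_norm_sq_rootDFT hζ fun k => (δ k : ℂ)
  simp only [Complex.norm_real, Real.norm_eq_abs, sq_abs] at hparseval
  rw [← hparseval]
  refine sum_range_le_two_mul_sum_Icc_half N (fun n => sq_nonneg _) ?_ fun n hn => ?_
  · rw [rootDFT_zero, ← Complex.ofReal_sum, hδ]
    simp
  · rw [rootDFT_sub_eq_conj hζ δ hn, Complex.norm_conj]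

theorem norm_sum_phase_mul (N n : ℕ) (x : Fin N → ℂ) :
    ‖∑ k : Fin N, Complex.I * (2 * π * n / N)
        * Complex.exp (Complex.I * π * n * (2 * ((k : ℕ) + 1) - 1) / N) * x k‖
      = 2 * π * n / N * ‖rootDFT (Complex.exp (2 * π * Complex.I / N)) x n‖ := by
  have hphase : ∀ k : Fin N, Complex.exp (Complex.I * π * n * (2 * ((k : ℕ) + 1) - 1) / N)
      = Complex.exp ((π * n / N : ℝ) * Complex.I)
        * Complex.exp (2 * π * Complex.I / N) ^ (n * (k : ℕ)) := by
    intro k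
    rw [← Complex.exp_nat_mul, ← Complex.exp_add]
    push_cast
    ring_nf
  have hfactor : ∑ k : Fin N, Complex.I * (2 * π * n / N)
        * Complex.exp (Complex.I * π * n * (2 * ((k : ℕ) + 1) - 1) / N) * x k
      = Complex.I * ((2 * π * n / N : ℝ) : ℂ) * Complex.exp ((π * n / N : ℝ) * Complex.I)
        * rootDFT (Complex.exp (2 * π * Complex.I / N)) x n := by
    rw [rootDFT, mul_sum]
    refine sum_congr rfl fun k _ => ?_
    rw [hphase]
    push_cast
    ring
  rw [hfactor, norm_mul, norm_mul, norm_mul, Complex.norm_I, Complex.norm_exp_ofReal_mul_I,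
    Complex.norm_of_nonneg (by positivity), one_mul, mul_one]

theorem stmt_10 (N : ℕ) (hN : 2 ≤ N) (δ : Fin N → ℝ)
    (hδ : ∑ k, δ k = 0)
    (V : ℕ → Fin N → ℂ)
    (hV : ∀ n : ℕ, ∀ k : Fin N,
      V n k = Complex.I * (2 * π * n / N)
        * Complex.exp (Complex.I * π * n * (2 * ((k : ℕ) + 1) - 1) / N)) :
    (2 * π ^ 2 / N) * ∑ k, δ k ^ 2
      ≤ ∑ n ∈ Finset.Icc 1 (N / 2),
          (1 / (n : ℝ) ^ 2) * ‖∑ k, V n k * (δ k : ℂ)‖ ^ 2 := by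
  set ζ := Complex.exp (2 * π * Complex.I / N)
  set energy := fun n => ‖rootDFT ζ (fun k => (δ k : ℂ)) n‖ ^ 2
  have hζ : IsPrimitiveRoot ζ N := Complex.isPrimitiveRoot_exp N (by omega)
  have hterm : ∀ n ∈ Icc 1 (N / 2),
      1 / (n : ℝ) ^ 2 * ‖∑ k, V n k * (δ k : ℂ)‖ ^ 2 = 4 * π ^ 2 / N ^ 2 * energy n := by
    intro n hn
    have hn0 : (n : ℝ) ≠ 0 := Nat.cast_ne_zero.mpr (by rw [mem_Icc] at hn; omega)
    simp_rw [hV, norm_sum_phase_mul]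
    field_simp
    ring
  rw [sum_congr rfl hterm, ← mul_sum]
  calc 2 * π ^ 2 / N * ∑ k, δ k ^ 2 = 2 * π ^ 2 / N ^ 2 * (N * ∑ k, δ k ^ 2) := by
        field_simp
    _ ≤ 2 * π ^ 2 / N ^ 2 * (2 * ∑ n ∈ Icc 1 (N / 2), energy n) :=
        mul_le_mul_of_nonneg_left (card_mul_sum_sq_le_two_mul_sum_norm_sq_rootDFT hζ δ hδ)
          (by positivity)
    _ = 4 * π ^ 2 / N ^ 2 * ∑ n ∈ Icc 1 (N / 2), energy n := by ring
end

section
/- Let f : ℝ² → ℝ be periodic with cell R = [0,√3]×[0,1], given by an absolutely convergent Fourier series f(x₁,x₂) = Σ_{(p,q)∈ℤ²} a_{pq} e^{2πi(p x₁/√3 + q x₂)} with a_{pq} ≥ 0. Let μ be the uniform measure on the 2L² triangular lattice points in R (as in the previous statement), and μ̃_L the normalized Lebesgue measure on R. Then J(μ) − J(μ̃_L) = (1/2) Σ_{(p,q)∈ℤ²∖{(0,0)}} [1 + (−1)^{p+q}] a_{Lp,Lq}. -/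
/-!
Expanding `f` in the characters `e_{pq}` of the period lattice `√3ℤ × ℤ` and integrating term by
term (the coefficients are summable and the characters unimodular), the energy of any finite
measure `ν` is `J(ν) = Σ a_{pq} |ν̂(p, q)|²`. For the normalized Lebesgue measure on the cell,
`ν̂` is the indicator of `(0, 0)`, so `J(μ̃_L) = a_{00}`. For the triangular lattice measure the
points form two translated copies of a square grid, so `μ̂(p, q)` factors into two normalized
geometric sums of `L`-th roots of unity times `(1 + e^{πi(p+q)/L})/2`: it vanishes unless
`L ∣ p` and `L ∣ q`, and equals `(1 + (-1)^{p₁+q₁})/2 ∈ {0, 1}` at `(L p₁, L q₁)`.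
-/

open MeasureTheory Complex Real
open scoped Real ENNReal ComplexConjugate

noncomputable def cellChar (pq : ℤ × ℤ) (x : ℝ × ℝ) : ℂ :=
  Complex.exp (2 * π * Complex.I * ((pq.1 : ℂ) * (x.1 : ℝ) / Real.sqrt 3 + (pq.2 : ℂ) * (x.2 : ℝ)))

noncomputable def cellFourier (ν : Measure (ℝ × ℝ)) (pq : ℤ × ℤ) : ℂ := ∫ x, cellChar pq x ∂ν

lemma cellChar_eq_exp_ofReal_mul_I (pq : ℤ × ℤ) (x : ℝ × ℝ) :
    cellChar pq x
      = Complex.exp (↑(2 * π * (pq.1 * x.1 / Real.sqrt 3 + pq.2 * x.2)) * Complex.I) := by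
  unfold cellChar; congr 1; push_cast; ring

lemma norm_cellChar (pq : ℤ × ℤ) (x : ℝ × ℝ) : ‖cellChar pq x‖ = 1 := by
  rw [cellChar_eq_exp_ofReal_mul_I, Complex.norm_exp_ofReal_mul_I]

@[fun_prop]
lemma continuous_cellChar (pq : ℤ × ℤ) : Continuous (cellChar pq) := by
  unfold cellChar; fun_prop

lemma cellChar_sub (pq : ℤ × ℤ) (x y : ℝ × ℝ) :
    cellChar pq (x - y) = cellChar pq x * conj (cellChar pq y) := by
  simp only [cellChar_eq_exp_ofReal_mul_I, ← Complex.exp_conj, map_mul, Complex.conj_ofReal,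
    Complex.conj_I, ← Complex.exp_add, Prod.fst_sub, Prod.snd_sub]
  congr 1
  push_cast
  ring

lemma norm_cellFourier_le (ν : Measure (ℝ × ℝ)) [IsFiniteMeasure ν] (pq : ℤ × ℤ) :
    ‖cellFourier ν pq‖ ≤ ν.real Set.univ := by
  simpa [cellFourier] using norm_integral_le_of_norm_le_const (μ := ν) (C := 1)
    (.of_forall fun x => (norm_cellChar pq x).le)

lemma integral_tsum_mul_of_norm_le_one {X ι : Type*} [MeasurableSpace X] [Countable ι]
    {ν : Measure X} [IsFiniteMeasure ν] {c : ι → ℂ} (hc : Summable fun i => ‖c i‖)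
    {g : ι → X → ℂ} (hgm : ∀ i, AEStronglyMeasurable (g i) ν) (hg : ∀ i x, ‖g i x‖ ≤ 1) :
    ∫ x, ∑' i, c i * g i x ∂ν = ∑' i, c i * ∫ x, g i x ∂ν := by
  have hbound : ∀ i x, ‖c i * g i x‖ ≤ ‖c i‖ := fun i x => by
    simpa [norm_mul] using mul_le_mul_of_nonneg_left (hg i x) (norm_nonneg (c i))
  have hint : ∀ i, Integrable (fun x => c i * g i x) ν := fun i =>
    (integrable_const ‖c i‖).mono' ((hgm i).const_mul _) (.of_forall (hbound i))
  have hsum : Summable fun i => ∫ x, ‖c i * g i x‖ ∂ν := by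
    refine .of_nonneg_of_le (fun i => integral_nonneg fun x => norm_nonneg _) (fun i => ?_)
      (hc.mul_right (ν.real Set.univ))
    calc ∫ x, ‖c i * g i x‖ ∂ν ≤ ∫ _, ‖c i‖ ∂ν :=
          integral_mono_of_nonneg (.of_forall fun x => norm_nonneg _) (integrable_const _)
            (.of_forall (hbound i))
      _ = ‖c i‖ * ν.real Set.univ := by rw [integral_const, smul_eq_mul, mul_comm]
  rw [← integral_tsum_of_summable_integral_norm hint hsum]
  exact tsum_congr fun i => integral_const_mul _ _

lemma cellChar_eq_mul (p q : ℤ) (z : ℝ × ℝ) :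
    cellChar (p, q) z
      = Complex.exp (2 * π * Complex.I * (p * z.1 / Real.sqrt 3))
        * Complex.exp (2 * π * Complex.I * (q * z.2)) := by
  rw [cellChar, ← Complex.exp_add]
  congr 1
  ring

lemma setIntegral_Icc_exp_two_pi_I_int_mul_div (n : ℤ) {T : ℝ} (hT : 0 < T) :
    ∫ x in Set.Icc 0 T, Complex.exp (2 * π * Complex.I * (n * x / T))
      = if n = 0 then (T : ℂ) else 0 := by
  rw [integral_Icc_eq_integral_Ioc, ← intervalIntegral.integral_of_le hT.le]
  split_ifs with hn
  · simp [hn]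
  · have hc : 2 * π * Complex.I * n / T ≠ 0 := by
      have : (T : ℂ) ≠ 0 := by exact_mod_cast hT.ne'
      simp [Real.pi_ne_zero, Complex.I_ne_zero, hn, this]
    simp_rw [show ∀ x : ℝ, 2 * π * Complex.I * (n * x / T) = 2 * π * Complex.I * n / T * x
      from fun x => by ring]
    have hperiod : 2 * π * Complex.I * n / T * (T : ℝ) = n * (2 * π * Complex.I) := by
      have : (T : ℂ) ≠ 0 := by exact_mod_cast hT.ne'
      field_simp
    rw [integral_exp_mul_complex hc, hperiod, Complex.exp_int_mul_two_pi_mul_I]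
    simp

noncomputable def cellLebesgue : Measure (ℝ × ℝ) :=
  ENNReal.ofReal (Real.sqrt 3)⁻¹ • volume.restrict (Set.Icc (0:ℝ) (Real.sqrt 3) ×ˢ Set.Icc (0:ℝ) 1)

instance : IsFiniteMeasure cellLebesgue := by
  have : Fact (volume (Set.Icc (0:ℝ) (Real.sqrt 3) ×ˢ Set.Icc (0:ℝ) 1) < ∞) :=
    ⟨(isCompact_Icc.prod isCompact_Icc).measure_lt_top⟩
  exact Measure.smul_finite _ ENNReal.ofReal_ne_top

lemma cellFourier_cellLebesgue (pq : ℤ × ℤ) :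
    cellFourier cellLebesgue pq = if pq = 0 then 1 else 0 := by
  obtain ⟨p, q⟩ := pq
  have h3 : 0 < Real.sqrt 3 := by positivity
  rw [cellFourier, cellLebesgue, integral_smul_measure, ENNReal.toReal_ofReal (inv_nonneg.2 h3.le),
    Measure.volume_eq_prod]
  simp_rw [cellChar_eq_mul]
  have hq := setIntegral_Icc_exp_two_pi_I_int_mul_div q one_pos
  simp only [Complex.ofReal_one, div_one] at hq
  rw [setIntegral_prod_mul (fun x : ℝ => Complex.exp (2 * π * Complex.I * (p * x / Real.sqrt 3)))
    (fun y : ℝ => Complex.exp (2 * π * Complex.I * (q * y))),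
    setIntegral_Icc_exp_two_pi_I_int_mul_div p h3, hq]
  have : ((Real.sqrt 3 : ℝ) : ℂ) ≠ 0 := by exact_mod_cast h3.ne'
  by_cases hp : p = 0 <;> by_cases hq : q = 0 <;> simp [hp, hq, this]

lemma sum_range_exp_two_pi_I_int_mul_div {N : ℕ} (hN : 0 < N) (p : ℤ) :
    ∑ k ∈ Finset.range N, Complex.exp (2 * π * Complex.I * (p * k / N))
      = if (N : ℤ) ∣ p then (N : ℂ) else 0 := by
  have hN0 : (N : ℂ) ≠ 0 := Nat.cast_ne_zero.2 hN.ne'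
  set ζ := Complex.exp (2 * π * Complex.I * (p / N))
  have hpow : ∀ k : ℕ, Complex.exp (2 * π * Complex.I * (p * k / N)) = ζ ^ k := fun k => by
    rw [← Complex.exp_nat_mul]; ring_nf
  simp_rw [hpow]
  have hζ_one : ζ = 1 ↔ (N : ℤ) ∣ p := by
    rw [Complex.exp_eq_one_iff]
    constructor
    · rintro ⟨n, hn⟩
      refine ⟨n, ?_⟩
      have : (p : ℂ) = N * n := by
        field_simp at hn
        linear_combination hn
      exact_mod_cast this
    · rintro ⟨m, rfl⟩
      exact ⟨m, by push_cast; field_simp⟩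
  split_ifs with hdvd
  · simp [hζ_one.2 hdvd]
  · have hζN : ζ ^ N = 1 := by
      rw [← Complex.exp_nat_mul, ← Complex.exp_int_mul_two_pi_mul_I p]
      congr 1
      field_simp
    rw [geom_sum_eq (mt hζ_one.1 hdvd), hζN, sub_self, zero_div]

lemma sum_range_two_mul {M : Type*} [AddCommMonoid M] (n : ℕ) (g : ℕ → M) :
    ∑ j ∈ Finset.range (2 * n), g j = ∑ m ∈ Finset.range n, (g (2 * m) + g (2 * m + 1)) := by
  induction n with
  | zero => simp
  | succ n ih =>
    rw [show 2 * (n + 1) = 2 * n + 1 + 1 by ring, Finset.sum_range_succ, Finset.sum_range_succ,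
      Finset.sum_range_succ, ih, add_assoc]

noncomputable def trianglePt (L k j : ℕ) : ℝ × ℝ :=
  ((if Even j then Real.sqrt 3 * (k : ℝ) / L else Real.sqrt 3 * ((k : ℝ) + 1 / 2) / L),
    (j : ℝ) / (2 * L))

noncomputable def triangleMeasure (L : ℕ) : Measure (ℝ × ℝ) :=
  ((2 * (L : ℝ≥0∞) ^ 2))⁻¹ •
    ∑ k ∈ Finset.range L, ∑ j ∈ Finset.range (2 * L), Measure.dirac (trianglePt L k j)

lemma isFiniteMeasure_triangleMeasure {L : ℕ} (hL : 0 < L) : IsFiniteMeasure (triangleMeasure L) :=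
  Measure.smul_finite _ (ENNReal.inv_ne_top.2 (by positivity))

lemma integral_triangleMeasure {E : Type*} [NormedAddCommGroup E] [NormedSpace ℝ E]
    [CompleteSpace E] (L : ℕ) (g : ℝ × ℝ → E) :
    ∫ x, g x ∂(triangleMeasure L)
      = (2 * (L : ℝ) ^ 2)⁻¹ • ∑ k ∈ Finset.range L, ∑ j ∈ Finset.range (2 * L),
          g (trianglePt L k j) := by
  rw [triangleMeasure, integral_smul_measure, ← Finset.sum_product',
    integral_finsetSum_measure fun _ _ => integrable_dirac enorm_lt_top, ← Finset.sum_product']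
  simp [ENNReal.toReal_inv]

section
variable {L : ℕ} (hL : 0 < L) (p q : ℤ) (k m : ℕ)
include hL

lemma cellChar_trianglePt_two_mul :
    cellChar (p, q) (trianglePt L k (2 * m))
      = Complex.exp (2 * π * Complex.I * (p * k / L))
        * Complex.exp (2 * π * Complex.I * (q * m / L)) := by
  have : (L : ℂ) ≠ 0 := by exact_mod_cast hL.ne'
  have : ((Real.sqrt 3 : ℝ) : ℂ) ≠ 0 := by exact_mod_cast (Real.sqrt_pos.2 three_pos).ne'
  rw [cellChar, trianglePt, if_pos (even_two_mul m), ← Complex.exp_add]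
  congr 1
  push_cast
  field_simp

lemma cellChar_trianglePt_two_mul_add_one :
    cellChar (p, q) (trianglePt L k (2 * m + 1))
      = Complex.exp (π * Complex.I * ((p + q) / L))
        * (Complex.exp (2 * π * Complex.I * (p * k / L))
          * Complex.exp (2 * π * Complex.I * (q * m / L))) := by
  have : (L : ℂ) ≠ 0 := by exact_mod_cast hL.ne'
  have : ((Real.sqrt 3 : ℝ) : ℂ) ≠ 0 := by exact_mod_cast (Real.sqrt_pos.2 three_pos).ne'
  rw [cellChar, trianglePt, if_neg (Nat.not_even_iff_odd.2 (odd_two_mul_add_one m)),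
    ← Complex.exp_add, ← Complex.exp_add]
  congr 1
  push_cast
  field_simp
  ring

lemma sum_cellChar_trianglePt :
    ∑ k ∈ Finset.range L, ∑ j ∈ Finset.range (2 * L), cellChar (p, q) (trianglePt L k j)
      = (1 + Complex.exp (π * Complex.I * ((p + q) / L)))
        * ((if (L : ℤ) ∣ p then (L : ℂ) else 0) * (if (L : ℤ) ∣ q then (L : ℂ) else 0)) := by
  rw [← sum_range_exp_two_pi_I_int_mul_div hL p, ← sum_range_exp_two_pi_I_int_mul_div hL q,
    Finset.sum_mul_sum, Finset.mul_sum]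
  simp_rw [Finset.mul_sum, sum_range_two_mul, cellChar_trianglePt_two_mul hL,
    cellChar_trianglePt_two_mul_add_one hL, ← one_add_mul _ (_ * _)]

lemma cellFourier_triangleMeasure :
    cellFourier (triangleMeasure L) (p, q)
      = (2 * (L : ℂ) ^ 2)⁻¹ * ((1 + Complex.exp (π * Complex.I * ((p + q) / L)))
        * ((if (L : ℤ) ∣ p then (L : ℂ) else 0) * (if (L : ℤ) ∣ q then (L : ℂ) else 0))) := by
  rw [cellFourier, integral_triangleMeasure, sum_cellChar_trianglePt hL, Complex.real_smul]
  push_cast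
  rfl

end

lemma cellFourier_triangleMeasure_int_mul {L : ℕ} (hL : 0 < L) (p q : ℤ) :
    cellFourier (triangleMeasure L) (L * p, L * q) = ((1 + (-1 : ℝ) ^ (p + q)) / 2 : ℝ) := by
  have hL0 : (L : ℂ) ≠ 0 := by exact_mod_cast hL.ne'
  have hsign : Complex.exp (π * Complex.I * ((((L * p : ℤ) : ℂ) + ((L * q : ℤ) : ℂ)) / L))
      = (-1) ^ (p + q) := by
    rw [← Complex.exp_pi_mul_I, ← Complex.exp_int_mul]
    congr 1
    push_cast
    field_simp
  rw [cellFourier_triangleMeasure hL, if_pos (dvd_mul_right _ _), if_pos (dvd_mul_right _ _), hsign]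
  push_cast
  field_simp

lemma cellFourier_triangleMeasure_eq_zero {L : ℕ} (hL : 0 < L) {p q : ℤ}
    (h : ¬((L : ℤ) ∣ p ∧ (L : ℤ) ∣ q)) : cellFourier (triangleMeasure L) (p, q) = 0 := by
  rw [cellFourier_triangleMeasure hL]
  rcases not_and_or.1 h with h | h <;> simp [h]

lemma injective_int_mul_prod {L : ℕ} (hL : 0 < L) :
    Function.Injective fun w : ℤ × ℤ => ((L : ℤ) * w.1, (L : ℤ) * w.2) := by
  have hL0 : (L : ℤ) ≠ 0 := by exact_mod_cast hL.ne'
  rintro ⟨p, q⟩ ⟨p', q'⟩ h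
  simp only [Prod.mk.injEq] at h
  exact Prod.ext (mul_left_cancel₀ hL0 h.1) (mul_left_cancel₀ hL0 h.2)

lemma one_add_neg_one_zpow_half_mul_self (n : ℤ) :
    (1 + (-1 : ℝ) ^ n) / 2 * ((1 + (-1 : ℝ) ^ n) / 2) = (1 + (-1 : ℝ) ^ n) / 2 := by
  rcases Int.even_or_odd n with h | h <;> simp [h.neg_one_zpow]

section Energy

variable {f : ℝ × ℝ → ℝ} {a : ℤ × ℤ → ℝ} (ha : ∀ pq, 0 ≤ a pq) (hsum : Summable a)
  (hF : ∀ x, (f x : ℂ) = ∑' pq, (a pq : ℂ) * cellChar pq x)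
include ha hsum hF

theorem energy_eq_tsum_mul_normSq (ν : Measure (ℝ × ℝ)) [IsFiniteMeasure ν] :
    ∫ x, ∫ y, f (x - y) ∂ν ∂ν = ∑' pq, a pq * Complex.normSq (cellFourier ν pq) := by
  have hnorm_a : ∀ pq, ‖(a pq : ℂ)‖ = a pq := fun pq => by simp [abs_of_nonneg (ha pq)]
  have hinner : ∀ x, ((∫ y, f (x - y) ∂ν : ℝ) : ℂ)
      = ∑' pq, (a pq * conj (cellFourier ν pq)) * cellChar pq x := by
    intro x
    simp_rw [← integral_complex_ofReal, hF, cellChar_sub, ← mul_assoc]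
    rw [integral_tsum_mul_of_norm_le_one (g := fun pq y => conj (cellChar pq y))
      (by simpa [norm_mul, norm_cellChar, hnorm_a, abs_of_nonneg (ha _)] using hsum)
      (fun pq => (continuous_conj.comp (continuous_cellChar pq)).aestronglyMeasurable)
      (fun pq y => by simp [norm_cellChar])]
    refine tsum_congr fun pq => ?_
    rw [integral_conj, cellFourier]
    ring
  apply Complex.ofReal_injective
  rw [← integral_complex_ofReal, Complex.ofReal_tsum]
  simp_rw [hinner]
  rw [integral_tsum_mul_of_norm_le_one ?_
    (fun pq => (continuous_cellChar pq).aestronglyMeasurable)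
    (fun pq x => (norm_cellChar pq x).le)]
  · refine tsum_congr fun pq => ?_
    rw [mul_assoc, mul_comm (conj _), ← cellFourier, Complex.mul_conj]
    push_cast
    ring
  · refine .of_nonneg_of_le (fun _ => norm_nonneg _) (fun pq => ?_)
      (hsum.mul_right (ν.real Set.univ))
    rw [norm_mul, hnorm_a, Complex.norm_conj]
    exact mul_le_mul_of_nonneg_left (norm_cellFourier_le ν pq) (ha pq)

lemma energy_cellLebesgue :
    ∫ x, ∫ y, f (x - y) ∂cellLebesgue ∂cellLebesgue = a 0 := by
  rw [energy_eq_tsum_mul_normSq ha hsum hF, tsum_eq_single 0 fun pq h => by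
    simp [cellFourier_cellLebesgue, h]]
  simp [cellFourier_cellLebesgue]

lemma energy_triangleMeasure {L : ℕ} (hL : 0 < L) :
    ∫ x, ∫ y, f (x - y) ∂triangleMeasure L ∂triangleMeasure L
      = 1 / 2 * ∑' w : ℤ × ℤ, (1 + (-1 : ℝ) ^ (w.1 + w.2)) * a (L * w.1, L * w.2) := by
  have := isFiniteMeasure_triangleMeasure hL
  have hsupp :
      Function.support (fun pq => a pq * Complex.normSq (cellFourier (triangleMeasure L) pq)) ⊆
        Set.range fun w : ℤ × ℤ => ((L : ℤ) * w.1, (L : ℤ) * w.2) := by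
    rintro ⟨p, q⟩ hpq
    by_contra hrange
    refine hpq ?_
    show a (p, q) * _ = 0
    rw [cellFourier_triangleMeasure_eq_zero hL fun ⟨⟨p₁, hp⟩, ⟨q₁, hq⟩⟩ =>
      hrange ⟨(p₁, q₁), by simp [hp, hq]⟩]
    simp
  rw [energy_eq_tsum_mul_normSq ha hsum hF, ← (injective_int_mul_prod hL).tsum_eq hsupp,
    ← tsum_mul_left]
  refine tsum_congr fun w => ?_
  rw [cellFourier_triangleMeasure_int_mul hL, Complex.normSq_ofReal,
    one_add_neg_one_zpow_half_mul_self]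
  ring

end Energy

theorem stmt_12_general (f : ℝ × ℝ → ℝ) (a : ℤ × ℤ → ℝ)
    (ha : ∀ pq : ℤ × ℤ, 0 ≤ a pq)
    (hsum : Summable a)
    (hF : ∀ x : ℝ × ℝ, (f x : ℂ) = ∑' pq : ℤ × ℤ,
      (a pq : ℂ) * Complex.exp (2 * π * Complex.I
        * ((pq.1 : ℂ) * (x.1 : ℝ) / Real.sqrt 3 + (pq.2 : ℂ) * (x.2 : ℝ))))
    (L : ℕ) (hL : 1 ≤ L)
    (μ μtilde : Measure (ℝ × ℝ))
    (hμ : μ = ((2 * (L : ℝ≥0∞) ^ 2))⁻¹ •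
      ∑ k ∈ Finset.range L, ∑ j ∈ Finset.range (2 * L),
        Measure.dirac
          ((if Even j then Real.sqrt 3 * (k : ℝ) / L
            else Real.sqrt 3 * ((k : ℝ) + 1 / 2) / L),
           (j : ℝ) / (2 * L)))
    (hμt : μtilde = ENNReal.ofReal (Real.sqrt 3)⁻¹ •
      volume.restrict (Set.Icc (0:ℝ) (Real.sqrt 3) ×ˢ Set.Icc (0:ℝ) 1)) :
    (∫ x, ∫ y, f (x - y) ∂μ ∂μ) - (∫ x, ∫ y, f (x - y) ∂μtilde ∂μtilde)
      = (1 / 2) * ∑' pq : ℤ × ℤ,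
          (if pq = 0 then 0
           else (1 + (-1 : ℝ) ^ (pq.1 + pq.2)) * a (L * pq.1, L * pq.2)) := by
  obtain rfl : μ = triangleMeasure L := hμ
  obtain rfl : μtilde = cellLebesgue := hμt
  have hb : Summable fun w : ℤ × ℤ => (1 + (-1 : ℝ) ^ (w.1 + w.2)) * a (L * w.1, L * w.2) := by
    refine .of_nonneg_of_le (fun w => mul_nonneg ?_ (ha _)) (fun w => ?_)
      (((hsum.comp_injective (injective_int_mul_prod hL))).mul_left 2)
    · rcases Int.even_or_odd (w.1 + w.2) with h | h <;> simp [h.neg_one_zpow]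
    · refine mul_le_mul_of_nonneg_right ?_ (ha _)
      rcases Int.even_or_odd (w.1 + w.2) with h | h <;> norm_num [h.neg_one_zpow]
  rw [energy_triangleMeasure ha hsum hF hL, energy_cellLebesgue ha hsum hF,
    hb.tsum_eq_add_tsum_ite 0]
  simp only [Prod.fst_zero, Prod.snd_zero, mul_zero, add_zero, zpow_zero, Prod.mk_zero_zero]
  ring

theorem stmt_12 (f : ℝ × ℝ → ℝ) (a : ℤ × ℤ → ℝ)
    (hcont : Continuous f)
    (ha : ∀ pq : ℤ × ℤ, 0 ≤ a pq)
    (hsum : Summable a)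
    (hF : ∀ x : ℝ × ℝ, (f x : ℂ) = ∑' pq : ℤ × ℤ,
      (a pq : ℂ) * Complex.exp (2 * π * Complex.I
        * ((pq.1 : ℂ) * (x.1 : ℝ) / Real.sqrt 3 + (pq.2 : ℂ) * (x.2 : ℝ))))
    (L : ℕ) (hL : 1 ≤ L)
    (μ μtilde : Measure (ℝ × ℝ))
    (hμ : μ = ((2 * (L : ℝ≥0∞) ^ 2))⁻¹ •
      ∑ k ∈ Finset.range L, ∑ j ∈ Finset.range (2 * L),
        Measure.dirac
          ((if Even j then Real.sqrt 3 * (k : ℝ) / L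
            else Real.sqrt 3 * ((k : ℝ) + 1 / 2) / L),
           (j : ℝ) / (2 * L)))
    (hμt : μtilde = ENNReal.ofReal (Real.sqrt 3)⁻¹ •
      volume.restrict (Set.Icc (0:ℝ) (Real.sqrt 3) ×ˢ Set.Icc (0:ℝ) 1)) :
    (∫ x, ∫ y, f (x - y) ∂μ ∂μ) - (∫ x, ∫ y, f (x - y) ∂μtilde ∂μtilde)
      = (1 / 2) * ∑' pq : ℤ × ℤ,
          (if pq = 0 then 0
           else (1 + (-1 : ℝ) ^ (pq.1 + pq.2)) * a (L * pq.1, L * pq.2)) :=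
  stmt_12_general f a ha hsum hF L hL μ μtilde hμ hμt
end

section
/- Let (a_n)_{n≥1} be positive reals satisfying a_{2k} ≤ a_k / (2k) for all sufficiently large k (a consequence of rapid decay), and the doubling-type condition max_{1≤m≤k} 1/(m²a_m) ≤ C₀/(k²a_k). Then there exists C > 0 such that for all sufficiently large N, Σ_{n=1}^∞ n² a_{nN} ≤ (C/N) a_{N/2} (with N even). -/
/-!
Fix an even `N = 2m` with `m` large. Writing `2 ^ j ≤ ν < 2 ^ (j + 1)`, the doubling condition
compares `ν N` with `2 ^ j N`, and iterating the decay `j` times from `N` gives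
`a (2 ^ j N) ≤ a N / (2N) ^ j`. Together, `ν ^ 4 a (ν N) ≤ 4 C₀ a N (8 / N) ^ j ≤ 4 C₀ a N`,
so `∑ ν² a (ν N) ≤ 4 C₀ a N ∑ 1 / ν²`, and one more decay step gives `a N ≤ a (N / 2) / N`.
-/

theorem apply_two_pow_mul_le_div_pow {a : ℕ → ℝ} {N : ℕ} (hN : 0 < N)
    (hnonneg : ∀ k ≥ N, 0 ≤ a k) (hdecay : ∀ k ≥ N, a (2 * k) ≤ a k / (2 * k)) (j : ℕ) :
    a (2 ^ j * N) ≤ a N / (2 * N) ^ j := by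
  induction j with
  | zero => simp
  | succ j ih =>
    have hle : N ≤ 2 ^ j * N := Nat.le_mul_of_pos_left N (Nat.two_pow_pos j)
    calc a (2 ^ (j + 1) * N) = a (2 * (2 ^ j * N)) := by rw [pow_succ, mul_comm _ 2, mul_assoc]
      _ ≤ a (2 ^ j * N) / (2 * (2 ^ j * N : ℕ)) := hdecay _ hle
      _ ≤ a (2 ^ j * N) / (2 * N) := by
        have := hnonneg _ hle
        gcongr
      _ ≤ a N / (2 * N) ^ j / (2 * N) := by gcongr
      _ = a N / (2 * N) ^ (j + 1) := by rw [div_div, ← pow_succ]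

theorem pow_four_mul_apply_mul_le {a : ℕ → ℝ} {C₀ : ℝ} {N : ℕ} (hN : 8 ≤ N) (hC₀ : 0 ≤ C₀)
    (hnonneg : ∀ k ≥ N, 0 ≤ a k) (hdecay : ∀ k ≥ N, a (2 * k) ≤ a k / (2 * k))
    (hdouble : ∀ m k, N ≤ m → m ≤ k → (k : ℝ) ^ 2 * a k ≤ C₀ * ((m : ℝ) ^ 2 * a m))
    {ν : ℕ} (hν : 0 < ν) :
    (ν : ℝ) ^ 4 * a (ν * N) ≤ 4 * C₀ * a N := by
  set j := Nat.log 2 ν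
  have hνR : (ν : ℝ) ≤ 2 * 2 ^ j := by
    have := Nat.lt_pow_succ_log_self (by norm_num : 1 < 2) ν
    rw [pow_succ'] at this
    exact_mod_cast this.le
  have hsq : (ν : ℝ) ^ 2 * a (ν * N) ≤ C₀ * (2 ^ j) ^ 2 * (a N / (2 * N) ^ j) := by
    have hN2j : N ≤ 2 ^ j * N := Nat.le_mul_of_pos_left N (Nat.two_pow_pos j)
    have h := hdouble (2 ^ j * N) (ν * N) hN2j
      (Nat.mul_le_mul_right N (Nat.pow_log_le_self 2 hν.ne'))
    push_cast at h
    have hdoubling : (ν : ℝ) ^ 2 * a (ν * N) ≤ C₀ * (2 ^ j) ^ 2 * a (2 ^ j * N) := by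
      refine le_of_mul_le_mul_left ?_ (by positivity : (0 : ℝ) < N ^ 2)
      linarith
    refine hdoubling.trans ?_
    gcongr
    exact apply_two_pow_mul_le_div_pow (by omega) hnonneg hdecay j
  have hratio : ((2 : ℝ) ^ j) ^ 4 / (2 * N) ^ j ≤ 1 := by
    rw [div_le_one (by positivity), ← pow_mul, mul_comm j, pow_mul]
    gcongr
    norm_num
    exact_mod_cast (by omega : 16 ≤ 2 * N)
  have haN : 0 ≤ a N := hnonneg N le_rfl
  calc (ν : ℝ) ^ 4 * a (ν * N) = ν ^ 2 * (ν ^ 2 * a (ν * N)) := by ring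
    _ ≤ ν ^ 2 * (C₀ * (2 ^ j) ^ 2 * (a N / (2 * N) ^ j)) := by gcongr
    _ ≤ (2 * 2 ^ j) ^ 2 * (C₀ * (2 ^ j) ^ 2 * (a N / (2 * N) ^ j)) := by gcongr
    _ = 4 * C₀ * a N * (((2 : ℝ) ^ j) ^ 4 / (2 * N) ^ j) := by ring
    _ ≤ 4 * C₀ * a N := mul_le_of_le_one_right (by positivity) hratio

theorem summable_one_div_nat_add_one_sq :
    Summable (fun n : ℕ => 1 / ((n : ℝ) + 1) ^ 2) := by
  refine ((summable_nat_add_iff 1).mpr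
    (Real.summable_one_div_nat_pow.mpr one_lt_two)).congr fun n => ?_
  push_cast
  rfl

theorem tsum_le_mul_tsum_one_div_nat_add_one_sq {f : ℕ → ℝ} {c : ℝ} (hf : ∀ n, 0 ≤ f n)
    (h : ∀ n : ℕ, ((n : ℝ) + 1) ^ 2 * f n ≤ c) :
    ∑' n, f n ≤ c * ∑' n : ℕ, 1 / ((n : ℝ) + 1) ^ 2 := by
  have hle : ∀ n : ℕ, f n ≤ c * (1 / ((n : ℝ) + 1) ^ 2) := fun n => by
    rw [mul_one_div, le_div_iff₀ (by positivity), mul_comm]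
    exact h n
  have hg := summable_one_div_nat_add_one_sq.mul_left c
  rw [← tsum_mul_left]
  exact (hg.of_nonneg_of_le hf hle).tsum_le_tsum hle hg

theorem stmt_17_general (a : ℕ → ℝ) (ha : ∀ n, 1 ≤ n → 0 < a n)
    (C₀ : ℝ)
    (hdecay : ∃ K : ℕ, ∀ k ≥ K, 1 ≤ k → a (2 * k) ≤ a k / (2 * k))
    (hdouble : ∀ k : ℕ, 1 ≤ k → ∀ m : ℕ, 1 ≤ m → m ≤ k →
      1 / ((m : ℝ) ^ 2 * a m) ≤ C₀ / ((k : ℝ) ^ 2 * a k)) :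
    ∃ C : ℝ, 0 < C ∧ ∃ N₀ : ℕ, ∀ N : ℕ, N₀ ≤ N → Even N →
      (∑' n : ℕ, ((n : ℝ) + 1) ^ 2 * a ((n + 1) * N)) ≤ (C / N) * a (N / 2) := by
  obtain ⟨K, hK⟩ := hdecay
  have hdouble' : ∀ m k : ℕ, 1 ≤ m → m ≤ k → (k : ℝ) ^ 2 * a k ≤ C₀ * ((m : ℝ) ^ 2 * a m) :=
    fun m k hm hmk => by
      have h := hdouble k (hm.trans hmk) m hm hmk
      have hmR : (0 : ℝ) < m := by exact_mod_cast hm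
      have hkR : (0 : ℝ) < k := by exact_mod_cast hm.trans hmk
      have := ha m hm
      have := ha k (hm.trans hmk)
      rwa [div_le_div_iff₀ (by positivity) (by positivity), one_mul] at h
  have hC₀ : 1 ≤ C₀ := by
    simpa using le_of_mul_le_mul_right (by simpa using hdouble' 1 1 le_rfl le_rfl) (ha 1 le_rfl)
  have hS : 0 < ∑' n : ℕ, 1 / ((n : ℝ) + 1) ^ 2 :=
    summable_one_div_nat_add_one_sq.tsum_pos (fun n => by positivity) 0 (by norm_num)
  refine ⟨4 * C₀ * ∑' n : ℕ, 1 / ((n : ℝ) + 1) ^ 2, by positivity, 2 * K + 8, ?_⟩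
  rintro N hN ⟨m, rfl⟩
  have hhalf : a (m + m) ≤ a m / (m + m : ℕ) := by
    simpa [two_mul] using hK m (by omega) (by omega)
  have hterm (n : ℕ) := pow_four_mul_apply_mul_le (N := m + m) (by omega) (by positivity)
    (fun k hk => (ha k (by omega)).le) (fun k hk => hK k (by omega) (by omega))
    (fun i k hi hik => hdouble' i k (by omega) hik) (ν := n + 1) (by omega)
  calc ∑' n : ℕ, ((n : ℝ) + 1) ^ 2 * a ((n + 1) * (m + m))
      ≤ 4 * C₀ * a (m + m) * ∑' n : ℕ, 1 / ((n : ℝ) + 1) ^ 2 :=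
        tsum_le_mul_tsum_one_div_nat_add_one_sq
          (fun n => by have := ha ((n + 1) * (m + m)) (by nlinarith); positivity)
          (fun n : ℕ => by have := hterm n; push_cast at this; linarith)
    _ ≤ 4 * C₀ * (a m / (m + m : ℕ)) * ∑' n : ℕ, 1 / ((n : ℝ) + 1) ^ 2 := by gcongr
    _ = _ := by rw [show (m + m) / 2 = m by omega]; ring

theorem stmt_17 (a : ℕ → ℝ) (ha : ∀ n, 1 ≤ n → 0 < a n)
    (C₀ : ℝ) (hC₀ : 0 < C₀)
    (hdecay : ∃ K : ℕ, ∀ k ≥ K, 1 ≤ k → a (2 * k) ≤ a k / (2 * k))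
    (hdouble : ∀ k : ℕ, 1 ≤ k → ∀ m : ℕ, 1 ≤ m → m ≤ k →
      1 / ((m : ℝ) ^ 2 * a m) ≤ C₀ / ((k : ℝ) ^ 2 * a k)) :
    ∃ C : ℝ, 0 < C ∧ ∃ N₀ : ℕ, ∀ N : ℕ, N₀ ≤ N → Even N →
      (∑' n : ℕ, ((n : ℝ) + 1) ^ 2 * a ((n + 1) * N)) ≤ (C / N) * a (N / 2) :=
  stmt_17_general a ha C₀ hdecay hdouble
end
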